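/- Let P = {e^{jβ}·(cos(jβ), sin(jβ)) : j ∈ {1,...,n}} be n points on the logarithmic spiral r = e^θ, where β > 0. Then the number of distinct (undirected) angles ∠(p, q, s) over all triples of distinct points p, q, s ∈ P is at most 3·C(n-1, 2). -/

import Mathlib

/-!
Multiplication by `z ≠ 0` is a spiral similarity of `ℂ`, so it preserves angles. The spiral
points are the powers `z ^ j` of `z = exp (β (1 + i))`, and dividing a triple by `z ^ (m - 1)`,
where `m` is its least exponent, gives a triple with the same angle that contains `z` itself.
Such a triple is determined by the other two exponents `2 ≤ a < b ≤ n` together with which of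
the three points is the vertex, whence at most `3 * (n - 1).choose 2` angles.
-/

open EuclideanGeometry Finset

namespace Complex

lemma euclideanAngle_mul_left {c : ℂ} (hc : c ≠ 0) (a b d : ℂ) :
    ∠ (c * a) (c * b) (c * d) = ∠ a b d := by
  simp only [EuclideanGeometry.angle, vsub_eq_sub, ← mul_sub, angle_mul_left hc]

lemma euclideanAngle_pow_sub {z : ℂ} (hz : z ≠ 0) {k a b c : ℕ} (ha : k ≤ a) (hb : k ≤ b)
    (hc : k ≤ c) : ∠ (z ^ a) (z ^ b) (z ^ c) = ∠ (z ^ (a - k)) (z ^ (b - k)) (z ^ (c - k)) := by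
  obtain ⟨a, rfl⟩ := Nat.exists_eq_add_of_le ha
  obtain ⟨b, rfl⟩ := Nat.exists_eq_add_of_le hb
  obtain ⟨c, rfl⟩ := Nat.exists_eq_add_of_le hc
  simp only [Nat.add_sub_cancel_left, pow_add, euclideanAngle_mul_left (pow_ne_zero k hz)]

lemma real_exp_smul_cos_add_sin_mul_I (x : ℝ) :
    Real.exp x • (Real.cos x + Real.sin x * I) = exp (x * (1 + I)) := by
  rw [mul_add, mul_one, exp_add, exp_mul_I, real_smul, ofReal_exp, ofReal_cos, ofReal_sin]

noncomputable def anglesThroughOne (z : ℂ) (n : ℕ) : Finset ℝ :=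
  {x ∈ Icc 2 n ×ˢ Icc 2 n | x.1 < x.2}.biUnion fun x =>
    {∠ z (z ^ x.1) (z ^ x.2), ∠ z (z ^ x.2) (z ^ x.1), ∠ (z ^ x.1) z (z ^ x.2)}

lemma card_anglesThroughOne_le (z : ℂ) (n : ℕ) :
    #(anglesThroughOne z n) ≤ 3 * (n - 1).choose 2 := by
  calc #(anglesThroughOne z n) ≤ #{x ∈ Icc 2 n ×ˢ Icc 2 n | x.1 < x.2} * 3 :=
        card_biUnion_le_card_mul _ _ _ fun _ _ => card_le_three
    _ = 3 * (n - 1).choose 2 := by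
        rw [card_product_filter_lt, Nat.card_Icc, mul_comm, show n + 1 - 2 = n - 1 by omega]

lemma euclideanAngle_pow_mem_anglesThroughOne_of_lt {z : ℂ} (hz : z ≠ 0) {n j₁ j₂ j₃ : ℕ}
    (h₁ : 1 ≤ j₁) (h₁₃ : j₁ < j₃) (h₃ : j₃ ≤ n) (h₂ : j₂ ∈ Icc 1 n) (h₂₁ : j₂ ≠ j₁)
    (h₂₃ : j₂ ≠ j₃) : ∠ (z ^ j₁) (z ^ j₂) (z ^ j₃) ∈ anglesThroughOne z n := by
  simp only [anglesThroughOne, mem_biUnion, mem_filter, mem_product, mem_Icc, mem_insert,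
    mem_singleton, Prod.exists]
  rw [mem_Icc] at h₂
  rcases lt_or_gt_of_ne h₂₁ with h₂₁ | h₁₂
  · rw [euclideanAngle_pow_sub hz (k := j₂ - 1) (by omega) (Nat.sub_le _ _) (by omega),
      show j₂ - (j₂ - 1) = 1 by omega, pow_one]
    exact ⟨j₁ - (j₂ - 1), j₃ - (j₂ - 1), by omega, Or.inr (Or.inr rfl)⟩
  · rw [euclideanAngle_pow_sub hz (k := j₁ - 1) (Nat.sub_le _ _) (by omega) (by omega),
      show j₁ - (j₁ - 1) = 1 by omega, pow_one]
    rcases lt_or_gt_of_ne h₂₃ with h₂₃ | h₃₂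
    · exact ⟨j₂ - (j₁ - 1), j₃ - (j₁ - 1), by omega, Or.inl rfl⟩
    · exact ⟨j₃ - (j₁ - 1), j₂ - (j₁ - 1), by omega, Or.inr (Or.inl rfl)⟩

lemma euclideanAngle_pow_mem_anglesThroughOne {z : ℂ} (hz : z ≠ 0) {n j₁ j₂ j₃ : ℕ}
    (h₁ : j₁ ∈ Icc 1 n) (h₂ : j₂ ∈ Icc 1 n) (h₃ : j₃ ∈ Icc 1 n) (h₁₂ : j₁ ≠ j₂) (h₂₃ : j₂ ≠ j₃)
    (h₁₃ : j₁ ≠ j₃) : ∠ (z ^ j₁) (z ^ j₂) (z ^ j₃) ∈ anglesThroughOne z n := by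
  rw [mem_Icc] at h₁ h₃
  rcases lt_or_gt_of_ne h₁₃ with h₁₃ | h₃₁
  · exact euclideanAngle_pow_mem_anglesThroughOne_of_lt hz h₁.1 h₁₃ h₃.2 h₂ h₁₂.symm h₂₃
  · rw [angle_comm]
    exact euclideanAngle_pow_mem_anglesThroughOne_of_lt hz h₃.1 h₃₁ h₁.2 h₂ h₂₃ h₁₂.symm

end Complex

open EuclideanGeometry in
theorem stmt_14_general (n : ℕ) (β : ℝ) (p : ℕ → ℂ)
    (hp : ∀ j : ℕ, p j = Real.exp (j * β) •
      (Real.cos (j * β) + Real.sin (j * β) * Complex.I)) :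
    {θ : ℝ | ∃ j₁ ∈ Finset.Icc 1 n, ∃ j₂ ∈ Finset.Icc 1 n, ∃ j₃ ∈ Finset.Icc 1 n,
        p j₁ ≠ p j₂ ∧ p j₂ ≠ p j₃ ∧ p j₁ ≠ p j₃ ∧
        θ = ∠ (p j₁) (p j₂) (p j₃)}.ncard ≤ 3 * (n - 1).choose 2 := by
  set z := Complex.exp (β * (1 + Complex.I))
  have hpz : ∀ j : ℕ, p j = z ^ j := fun j => by
    rw [hp, Complex.real_exp_smul_cos_add_sin_mul_I, ← Complex.exp_nat_mul]
    congr 1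
    push_cast
    ring
  calc _ ≤ #(Complex.anglesThroughOne z n) := by
        rw [← Set.ncard_coe_finset]
        refine Set.ncard_le_ncard ?_ (finite_toSet _)
        rintro θ ⟨j₁, h₁, j₂, h₂, j₃, h₃, h₁₂, h₂₃, h₁₃, rfl⟩
        simp only [hpz] at h₁₂ h₂₃ h₁₃ ⊢
        exact Complex.euclideanAngle_pow_mem_anglesThroughOne (Complex.exp_ne_zero _) h₁ h₂ h₃
          (ne_of_apply_ne _ h₁₂) (ne_of_apply_ne _ h₂₃) (ne_of_apply_ne _ h₁₃)
    _ ≤ 3 * (n - 1).choose 2 := Complex.card_anglesThroughOne_le z n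

open EuclideanGeometry in
theorem stmt_14 (n : ℕ) (β : ℝ) (hβ : 0 < β) (p : ℕ → ℂ)
    (hp : ∀ j : ℕ, p j = Real.exp (j * β) •
      (Real.cos (j * β) + Real.sin (j * β) * Complex.I)) :
    {θ : ℝ | ∃ j₁ ∈ Finset.Icc 1 n, ∃ j₂ ∈ Finset.Icc 1 n, ∃ j₃ ∈ Finset.Icc 1 n,
        p j₁ ≠ p j₂ ∧ p j₂ ≠ p j₃ ∧ p j₁ ≠ p j₃ ∧
        θ = ∠ (p j₁) (p j₂) (p j₃)}.ncard ≤ 3 * (n - 1).choose 2 :=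
  stmt_14_general n β p hp
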